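/- arXiv:2210.00537 — 2 statements merged into one kernel-verified Lean document; each statement's English description precedes it below -/
import Mathlib

section
/- Let γ ≥ 0, R > 1, and G₀(r,ρ) = (1/(1+2γ)) · ((R^{1+2γ} − ρ^{1+2γ})/(R^{1+2γ} − 1)) · (ρ^{−γ} r^{1+γ} − ρ^{−γ} r^{−γ}) for 1 ≤ r ≤ ρ ≤ R. Then 0 ≤ G₀(r,ρ) ≤ r/(1+2γ) for all 1 ≤ r ≤ ρ ≤ R. -/
/-- The explicit Green's function of `-∂ᵣ² + γ(γ+1)/r²` on `[1,R]` (region `r ≤ ρ`). -/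
noncomputable def Green0 (γ R r ρ : ℝ) : ℝ :=
  (1 / (1 + 2*γ)) * ((R ^ (1 + 2*γ) - ρ ^ (1 + 2*γ)) / (R ^ (1 + 2*γ) - 1)) *
    (ρ ^ (-γ) * r ^ (1 + γ) - ρ ^ (-γ) * r ^ (-γ))

theorem stmt_3 (γ R : ℝ) (hγ : 0 ≤ γ) (hR : 1 < R) :
    ∀ r ρ : ℝ, 1 ≤ r → r ≤ ρ → ρ ≤ R →
      0 ≤ Green0 γ R r ρ ∧ Green0 γ R r ρ ≤ r / (1 + 2*γ) := by
  intro r ρ hr hrρ hρR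
  have ha : (0:ℝ) < 1 + 2*γ := by linarith
  have hρ1 : (1:ℝ) ≤ ρ := le_trans hr hrρ
  have hρ0 : (0:ℝ) < ρ := by linarith
  have hr0 : (0:ℝ) < r := by linarith
  -- denominator positive
  have hRa : 1 < R ^ (1 + 2*γ) := Real.one_lt_rpow hR ha
  have hden : 0 < R ^ (1 + 2*γ) - 1 := by linarith
  -- B ∈ [0,1]
  have hρa : ρ ^ (1 + 2*γ) ≤ R ^ (1 + 2*γ) :=
    Real.rpow_le_rpow hρ0.le hρR ha.le
  have hρa1 : 1 ≤ ρ ^ (1 + 2*γ) := Real.one_le_rpow hρ1 ha.le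
  have hB0 : 0 ≤ (R ^ (1 + 2*γ) - ρ ^ (1 + 2*γ)) / (R ^ (1 + 2*γ) - 1) :=
    div_nonneg (by linarith) hden.le
  have hB1 : (R ^ (1 + 2*γ) - ρ ^ (1 + 2*γ)) / (R ^ (1 + 2*γ) - 1) ≤ 1 := by
    rw [div_le_one hden]; linarith
  -- C ≥ 0
  have hrexp : r ^ (-γ) ≤ r ^ (1 + γ) :=
    Real.rpow_le_rpow_of_exponent_le hr (by linarith)
  have hρneg : 0 ≤ ρ ^ (-γ) := (Real.rpow_pos_of_pos hρ0 _).le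
  have hC0 : 0 ≤ ρ ^ (-γ) * r ^ (1 + γ) - ρ ^ (-γ) * r ^ (-γ) := by
    have := mul_le_mul_of_nonneg_left hrexp hρneg
    linarith
  -- C ≤ r
  have hinv : ρ ^ (-γ) ≤ r ^ (-γ) :=
    Real.rpow_le_rpow_of_nonpos hr0 hrρ (by linarith)
  have hCr : ρ ^ (-γ) * r ^ (1 + γ) - ρ ^ (-γ) * r ^ (-γ) ≤ r := by
    have h1 : ρ ^ (-γ) * r ^ (1 + γ) ≤ r ^ (-γ) * r ^ (1 + γ) :=
      mul_le_mul_of_nonneg_right hinv (Real.rpow_pos_of_pos hr0 _).le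
    have h2 : r ^ (-γ) * r ^ (1 + γ) = r := by
      rw [← Real.rpow_add hr0]
      norm_num
    have h3 : 0 ≤ ρ ^ (-γ) * r ^ (-γ) :=
      mul_nonneg hρneg (Real.rpow_pos_of_pos hr0 _).le
    linarith
  constructor
  · exact mul_nonneg (mul_nonneg (by positivity) hB0) hC0
  · unfold Green0
    rw [div_eq_mul_one_div r (1 + 2*γ), mul_comm r]
    rw [mul_assoc]
    refine mul_le_mul_of_nonneg_left ?_ (by positivity)
    calc (R ^ (1 + 2*γ) - ρ ^ (1 + 2*γ)) / (R ^ (1 + 2*γ) - 1) *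
        (ρ ^ (-γ) * r ^ (1 + γ) - ρ ^ (-γ) * r ^ (-γ)) ≤ 1 * r :=
          mul_le_mul hB1 hCr hC0 zero_le_one
      _ = r := one_mul r
end

section
/- Let γ ≥ 0, R > 1, and G₀(r,ρ) = (1/(1+2γ)) · ((R^{1+2γ} − ρ^{1+2γ})/(R^{1+2γ} − 1)) · (ρ^{−γ} r^{1+γ} − ρ^{−γ} r^{−γ}) for 1 ≤ r ≤ ρ ≤ R. Then the partial derivative in r satisfies |∂ᵣG₀(r,ρ)| ≤ (1+2γ)/(1+2γ) · ((1+γ)(r/ρ)^γ + γ ρ^{−γ} r^{−1−γ})/(1+2γ) ≤ 1 for all 1 ≤ r ≤ ρ ≤ R; in particular |∂ᵣG₀(r,ρ)| ≤ 1. -/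
theorem stmt_4 (γ R : ℝ) (hγ : 0 ≤ γ) (hR : 1 < R) :
    ∀ r ρ : ℝ, 1 ≤ r → r ≤ ρ → ρ ≤ R →
      |deriv (fun s => Green0 γ R s ρ) r| ≤
        ((1 + γ) * (r / ρ) ^ γ + γ * ρ ^ (-γ) * r ^ (-(1 + γ))) / (1 + 2*γ) ∧
      |deriv (fun s => Green0 γ R s ρ) r| ≤ 1 := by
  intro r ρ h1r hrρ hρR
  have hr0 : (0:ℝ) < r := lt_of_lt_of_le one_pos h1r
  have hρ0 : (0:ℝ) < ρ := lt_of_lt_of_le hr0 hrρ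
  have h1ρ : (1:ℝ) ≤ ρ := h1r.trans hrρ
  have he0 : (0:ℝ) < 1 + 2*γ := by linarith
  set C : ℝ := (1 / (1 + 2*γ)) * ((R ^ (1 + 2*γ) - ρ ^ (1 + 2*γ)) / (R ^ (1 + 2*γ) - 1))
    with hCdef
  -- derivative computation
  have hderiv : deriv (fun s => Green0 γ R s ρ)  r
      = C * (ρ ^ (-γ) * ((1+γ) * r ^ γ + γ * r ^ (-(1+γ)))) := by
    have h1 : HasDerivAt (fun s : ℝ => s ^ (1+γ)) ((1+γ) * r ^ ((1+γ)-1)) r :=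
      Real.hasDerivAt_rpow_const (Or.inl (ne_of_gt hr0))
    have h2 : HasDerivAt (fun s : ℝ => s ^ (-γ)) ((-γ) * r ^ (-γ-1)) r :=
      Real.hasDerivAt_rpow_const (Or.inl (ne_of_gt hr0))
    have h : HasDerivAt (fun s => Green0 γ R s ρ)
        (C * (ρ ^ (-γ) * ((1+γ) * r ^ ((1+γ)-1)) - ρ ^ (-γ) * ((-γ) * r ^ (-γ-1)))) r :=
      ((h1.const_mul (ρ^(-γ))).sub (h2.const_mul (ρ^(-γ)))).const_mul C
    rw [h.deriv, show (1+γ)-1 = γ by ring, show -γ-1 = -(1+γ) by ring]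
    ring
  -- bound on C
  have hRe : (1:ℝ) < R ^ (1 + 2*γ) := Real.one_lt_rpow_iff_of_pos (by linarith) |>.2 (Or.inl ⟨hR, he0⟩)
  have hρe : (1:ℝ) ≤ ρ ^ (1 + 2*γ) := Real.one_le_rpow h1ρ he0.le
  have hρRe : ρ ^ (1 + 2*γ) ≤ R ^ (1 + 2*γ) := Real.rpow_le_rpow hρ0.le hρR he0.le
  have hCnonneg : 0 ≤ C := by
    apply mul_nonneg (by positivity)
    apply div_nonneg (by linarith) (by linarith)
  have hCle : C ≤ 1 / (1 + 2*γ) := by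
    rw [hCdef]
    have hq : (R ^ (1 + 2*γ) - ρ ^ (1 + 2*γ)) / (R ^ (1 + 2*γ) - 1) ≤ 1 := by
      rw [div_le_one (by linarith)]; linarith
    calc (1 / (1 + 2*γ)) * ((R ^ (1 + 2*γ) - ρ ^ (1 + 2*γ)) / (R ^ (1 + 2*γ) - 1))
        ≤ (1 / (1 + 2*γ)) * 1 := by
          apply mul_le_mul_of_nonneg_left hq (by positivity)
      _ = 1 / (1 + 2*γ) := by ring
  -- the factor D
  set D : ℝ := ρ ^ (-γ) * ((1+γ) * r ^ γ + γ * r ^ (-(1+γ))) with hDdef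
  have hDnonneg : 0 ≤ D := by positivity
  have habs : |deriv (fun s => Green0 γ R s ρ) r| = C * D := by
    rw [hderiv, abs_of_nonneg (mul_nonneg hCnonneg hDnonneg)]
  have hdivρ : (r / ρ) ^ γ = ρ ^ (-γ) * r ^ γ := by
    rw [Real.div_rpow hr0.le hρ0.le, Real.rpow_neg hρ0.le, div_eq_mul_inv, mul_comm]
  have hbound1 : |deriv (fun s => Green0 γ R s ρ) r| ≤
      ((1 + γ) * (r / ρ) ^ γ + γ * ρ ^ (-γ) * r ^ (-(1 + γ))) / (1 + 2*γ) := by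
    rw [habs, hdivρ]
    have : C * D ≤ (1 / (1 + 2*γ)) * D := mul_le_mul_of_nonneg_right hCle hDnonneg
    calc C * D ≤ (1 / (1 + 2*γ)) * D := this
      _ = ((1 + γ) * (ρ ^ (-γ) * r ^ γ) + γ * ρ ^ (-γ) * r ^ (-(1 + γ))) / (1 + 2*γ) := by
          rw [hDdef]; ring
  refine ⟨hbound1, hbound1.trans ?_⟩
  -- second bound : RHS ≤ 1
  have h1 : (r / ρ) ^ γ ≤ 1 := by
    apply Real.rpow_le_one (by positivity) _ hγ
    rw [div_le_one hρ0]; exact hrρ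
  have h2 : ρ ^ (-γ) ≤ 1 := Real.rpow_le_one_of_one_le_of_nonpos h1ρ (by linarith)
  have h3 : r ^ (-(1+γ)) ≤ 1 := Real.rpow_le_one_of_one_le_of_nonpos h1r (by linarith)
  have h2' : (0:ℝ) ≤ ρ ^ (-γ) := by positivity
  have h3' : (0:ℝ) ≤ r ^ (-(1+γ)) := by positivity
  rw [div_le_one he0]
  have : γ * ρ ^ (-γ) * r ^ (-(1 + γ)) ≤ γ := by
    calc γ * ρ ^ (-γ) * r ^ (-(1 + γ)) ≤ γ * 1 * 1 := by
          apply mul_le_mul (mul_le_mul le_rfl h2 h2' hγ) h3 h3' (by linarith)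
      _ = γ := by ring
  nlinarith [Real.rpow_nonneg (div_nonneg hr0.le hρ0.le) γ]
end
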